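/- Let T be a positive linear contraction on real Lᵖ(X), 1 ≤ p < ∞. Suppose f ≥ 0 satisfies T f = f, and E is a Borel set such that T maps functions supported in E to functions supported in E. Then T(χ_E f) = χ_E f. -/

import Mathlib

open MeasureTheory Filter
open scoped ENNReal

/-!
On `E`, `T(χ_E f) ≤ T f = f = χ_E f` by positivity, and off `E` both sides vanish by invariance,
so `T(χ_E f) ≤ χ_E f`. Hence `h = χ_{X∖E} f = f - χ_E f` satisfies `0 ≤ h ≤ T h`, while
`‖T h‖ ≤ ‖h‖`; since the `Lᵖ` norm (`p < ∞`) is strictly monotone on the positive cone, `T h = h`.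
-/

namespace MeasureTheory

variable {X : Type*} [MeasurableSpace X] {μ : Measure X} {p : ℝ≥0∞}

theorem ae_eq_of_nonneg_of_le_of_eLpNorm_le (hp0 : p ≠ 0) (hp : p ≠ ⊤) {f g : X → ℝ}
    (hf : 0 ≤ᵐ[μ] f) (hfg : f ≤ᵐ[μ] g) (hg : AEStronglyMeasurable g μ)
    (hf_fin : eLpNorm f p μ ≠ ⊤) (hnorm : eLpNorm g p μ ≤ eLpNorm f p μ) :
    f =ᵐ[μ] g := by
  have hp_pos : 0 < p.toReal := ENNReal.toReal_pos hp0 hp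
  have hpow_le : (fun x => ‖f x‖ₑ ^ p.toReal) ≤ᵐ[μ] fun x => ‖g x‖ₑ ^ p.toReal := by
    filter_upwards [hf, hfg] with x hfx hfgx
    rw [Real.enorm_of_nonneg hfx, Real.enorm_of_nonneg (hfx.trans hfgx)]
    gcongr
  have hlint : ∫⁻ x, ‖g x‖ₑ ^ p.toReal ∂μ ≤ ∫⁻ x, ‖f x‖ₑ ^ p.toReal ∂μ := by
    rw [eLpNorm_eq_lintegral_rpow_enorm_toReal hp0 hp,
      eLpNorm_eq_lintegral_rpow_enorm_toReal hp0 hp] at hnorm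
    exact (ENNReal.rpow_le_rpow_iff (by positivity)).mp hnorm
  have hpow_eq := ae_eq_of_ae_le_of_lintegral_le hpow_le
    (lintegral_rpow_enorm_lt_top_of_eLpNorm_lt_top hp0 hp hf_fin.lt_top).ne
    (hg.enorm.pow_const _) hlint
  filter_upwards [hf, hfg, hpow_eq] with x hfx hfgx hx
  rw [Real.enorm_of_nonneg hfx, Real.enorm_of_nonneg (hfx.trans hfgx)] at hx
  exact (ENNReal.ofReal_eq_ofReal_iff hfx (hfx.trans hfgx)).mp
    (ENNReal.rpow_left_injective hp_pos.ne' hx)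

theorem Lp.le_of_le_of_ae_eq_indicator {E : Set X} {u f g : Lp ℝ p μ}
    (hu : u ≤ f) (hu_supp : ∀ᵐ x ∂μ, x ∉ E → u x = 0) (hg : ⇑g =ᵐ[μ] E.indicator ⇑f) :
    u ≤ g := by
  rw [← Lp.coeFn_le] at hu ⊢
  filter_upwards [hu, hu_supp, hg] with x hux hux_supp hgx
  by_cases hx : x ∈ E
  · rwa [hgx, Set.indicator_of_mem hx]
  · rw [hux_supp hx, hgx, Set.indicator_of_notMem hx]

variable [Fact (1 ≤ p)]

theorem Lp.eq_of_nonneg_of_le_of_norm_le (hp : p ≠ ⊤) {f g : Lp ℝ p μ}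
    (hf : 0 ≤ f) (hfg : f ≤ g) (hnorm : ‖g‖ ≤ ‖f‖) : f = g := by
  refine Lp.ext (ae_eq_of_nonneg_of_le_of_eLpNorm_le ?_ hp ((Lp.coeFn_nonneg f).mpr hf)
    ((Lp.coeFn_le f g).mpr hfg) (Lp.aestronglyMeasurable g) (Lp.eLpNorm_ne_top f) ?_)
  · exact (zero_lt_one.trans_le Fact.out).ne'
  · exact (ENNReal.toReal_le_toReal (Lp.eLpNorm_ne_top _) (Lp.eLpNorm_ne_top _)).mp hnorm

theorem Lp.apply_eq_self_of_apply_le_self (hp : p ≠ ⊤)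
    (T : Lp ℝ p μ →L[ℝ] Lp ℝ p μ) (hcontr : ∀ h, ‖T h‖ ≤ ‖h‖) {f g : Lp ℝ p μ}
    (hfix : T f = f) (hgf : g ≤ f) (hTg : T g ≤ g) : T g = g := by
  -- `h := f - g` is nonnegative and only grows under `T`, so the contraction fixes it.
  have hh : f - g = T (f - g) :=
    Lp.eq_of_nonneg_of_le_of_norm_le hp (sub_nonneg.mpr hgf)
      (by rw [map_sub, hfix]; exact sub_le_sub_left hTg f) (hcontr _)
  rw [map_sub, hfix] at hh
  exact (sub_right_injective hh).symm

end MeasureTheory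

theorem T_indicator_fixed
    {X : Type*} [MeasurableSpace X] (μ : Measure X)
    (p : ENNReal) [Fact (1 ≤ p)] (hp : p ≠ ⊤)
    (T : Lp ℝ p μ →L[ℝ] Lp ℝ p μ)
    (hcontr : ∀ g, ‖T g‖ ≤ ‖g‖)
    (hpos : ∀ g : Lp ℝ p μ, 0 ≤ g → 0 ≤ T g)
    (f : Lp ℝ p μ) (hf0 : 0 ≤ f) (hfix : T f = f)
    (E : Set X)
    (hEinv : ∀ g : Lp ℝ p μ, (∀ᵐ x ∂μ, x ∉ E → g x = 0) →
      ∀ᵐ x ∂μ, x ∉ E → (T g) x = 0)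
    (g : Lp ℝ p μ) (hg : ⇑g =ᵐ[μ] E.indicator ⇑f) :
    T g = g := by
  have hgf : g ≤ f := by
    rw [← Lp.coeFn_le]
    filter_upwards [hg, (Lp.coeFn_nonneg f).mpr hf0] with x hgx hfx
    exact hgx ▸ Set.indicator_le_self' (fun _ _ => hfx) x
  have hg_supp : ∀ᵐ x ∂μ, x ∉ E → g x = 0 := by
    filter_upwards [hg] with x hgx hx
    rw [hgx, Set.indicator_of_notMem hx]
  have hTg_le : T g ≤ f := by
    have := hpos (f - g) (sub_nonneg.mpr hgf)
    rwa [map_sub, hfix, sub_nonneg] at this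
  exact Lp.apply_eq_self_of_apply_le_self hp T hcontr hfix hgf
    (Lp.le_of_le_of_ae_eq_indicator hTg_le (hEinv g hg_supp) hg)
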